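/- There exists a joint distribution over two random variables X and Y, each taking 4 values, such that I(X:Y) > log₂ 3; consequently no common-cause-only model with a latent variable of cardinality 3 can generate it. -/

import Mathlib

open Finset Real
open scoped Classical

/-- Probability mass of an event under pmf `p` on a finite sample space. -/
noncomputable def pmass {Ω : Type*} [Fintype Ω] (p : Ω → ℝ) (E : Ω → Prop) : ℝ :=
  ∑ ω, if E ω then p ω else 0

/-- Conditional probability P(E | F). -/
noncomputable def condProb {Ω : Type*} [Fintype Ω] (p : Ω → ℝ) (E F : Ω → Prop) : ℝ :=
  pmass p (fun ω => E ω ∧ F ω) / pmass p F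

/-- `p` is a probability mass function. -/
structure IsPMF {Ω : Type*} [Fintype Ω] (p : Ω → ℝ) : Prop where
  nonneg : ∀ ω, 0 ≤ p ω
  sum_one : ∑ ω, p ω = 1

/-- Base-2 Shannon entropy of a finite-valued random variable. -/
noncomputable def ent {Ω α : Type*} [Fintype Ω] [Fintype α] (p : Ω → ℝ) (X : Ω → α) : ℝ :=
  -∑ a, pmass p (fun ω => X ω = a) * Real.logb 2 (pmass p (fun ω => X ω = a))

/-- Mutual information I(X:Y) = H(X) + H(Y) - H(X,Y). -/
noncomputable def mi {Ω α β : Type*} [Fintype Ω] [Fintype α] [Fintype β]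
    (p : Ω → ℝ) (X : Ω → α) (Y : Ω → β) : ℝ :=
  ent p X + ent p Y - ent p (fun ω => (X ω, Y ω))

/-- Entropy of `X` in the conditional distribution given event `E`. -/
noncomputable def condEntGiven {Ω α : Type*} [Fintype Ω] [Fintype α]
    (p : Ω → ℝ) (X : Ω → α) (E : Ω → Prop) : ℝ :=
  -∑ a, condProb p (fun ω => X ω = a) E * Real.logb 2 (condProb p (fun ω => X ω = a) E)

/-- Conditional entropy H(X|Y) = ∑_y P(Y=y) H(X|Y=y). -/
noncomputable def condEnt {Ω α β : Type*} [Fintype Ω] [Fintype α] [Fintype β]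
    (p : Ω → ℝ) (X : Ω → α) (Y : Ω → β) : ℝ :=
  ∑ b, pmass p (fun ω => Y ω = b) * condEntGiven p X (fun ω => Y ω = b)

/-- Mutual information of X and Y in the conditional distribution given event `E`. -/
noncomputable def condMIGiven {Ω α β : Type*} [Fintype Ω] [Fintype α] [Fintype β]
    (p : Ω → ℝ) (X : Ω → α) (Y : Ω → β) (E : Ω → Prop) : ℝ :=
  condEntGiven p X E + condEntGiven p Y E - condEntGiven p (fun ω => (X ω, Y ω)) E

/-- Conditional mutual information I(X:Y|Z) = ∑_z P(Z=z) I(X:Y|Z=z). -/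
noncomputable def condMI {Ω α β γ : Type*} [Fintype Ω] [Fintype α] [Fintype β] [Fintype γ]
    (p : Ω → ℝ) (X : Ω → α) (Y : Ω → β) (Z : Ω → γ) : ℝ :=
  ∑ z, pmass p (fun ω => Z ω = z) * condMIGiven p X Y (fun ω => Z ω = z)

/-- X and Y are conditionally independent given U:
P(X=a, Y=b | U=u) = P(X=a|U=u)·P(Y=b|U=u) whenever P(U=u) > 0. -/
def CondIndep {Ω α β γ : Type*} [Fintype Ω]
    (p : Ω → ℝ) (X : Ω → α) (Y : Ω → β) (U : Ω → γ) : Prop :=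
  ∀ u a b, 0 < pmass p (fun ω => U ω = u) →
    condProb p (fun ω => X ω = a ∧ Y ω = b) (fun ω => U ω = u) =
      condProb p (fun ω => X ω = a) (fun ω => U ω = u) *
        condProb p (fun ω => Y ω = b) (fun ω => U ω = u)

/-- X and Y are (unconditionally) independent. -/
def Indep {Ω α β : Type*} [Fintype Ω]
    (p : Ω → ℝ) (X : Ω → α) (Y : Ω → β) : Prop :=
  ∀ a b, pmass p (fun ω => X ω = a ∧ Y ω = b) =
    pmass p (fun ω => X ω = a) * pmass p (fun ω => Y ω = b)

/-!
Take `X = Y` uniform on four values, i.e. the uniform distribution on the diagonal of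
`Fin 4 × Fin 4` (a simpler witness than the paper's Table 1). Then `I(X:Y) = log₂ 4 = 2 > log₂ 3`.
If `X` and `Y` were conditionally independent given `U`, the joint matrix `P(X = a, Y = b)`
would factor as `∑ᵤ P(U = u) P(X = a | U = u) P(Y = b | U = u)`, a product of a `4 × |U|` and a
`|U| × 4` matrix, hence have rank at most `|U|`; but the diagonal joint matrix has rank 4.
-/

section Pmass

variable {Ω : Type*} [Fintype Ω] {q : Ω → ℝ}

lemma pmass_nonneg (hq : ∀ ω, 0 ≤ q ω) (E : Ω → Prop) : 0 ≤ pmass q E :=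
  Finset.sum_nonneg fun ω _ => by split_ifs <;> simp [hq ω]

lemma pmass_mono (hq : ∀ ω, 0 ≤ q ω) {E F : Ω → Prop} (h : ∀ ω, E ω → F ω) :
    pmass q E ≤ pmass q F :=
  Finset.sum_le_sum fun ω _ => by
    by_cases hE : E ω
    · simp [hE, h ω hE]
    · by_cases hF : F ω <;> simp [hE, hF, hq ω]

lemma pmass_eq_sum_pmass_and {γ : Type*} [Fintype γ] (E : Ω → Prop) (U : Ω → γ) :
    pmass q E = ∑ u, pmass q (fun ω => E ω ∧ U ω = u) := by
  unfold pmass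
  rw [Finset.sum_comm]
  refine Finset.sum_congr rfl fun ω _ => ?_
  by_cases h : E ω <;> simp [h]

/-- Unlike `condProb`, this holds also when `F` is null, where `condProb` is `0 / 0 = 0`. -/
lemma pmass_and_eq_mul_condProb (hq : ∀ ω, 0 ≤ q ω) (E F : Ω → Prop) :
    pmass q (fun ω => E ω ∧ F ω) = pmass q F * condProb q E F := by
  rcases (pmass_nonneg hq F).eq_or_lt with hF | hF
  · rw [← hF, zero_mul]
    exact le_antisymm (hF ▸ pmass_mono hq fun ω h => h.2) (pmass_nonneg hq _)
  · rw [condProb, mul_div_cancel₀ _ hF.ne']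

end Pmass

section JointMatrix

variable {Ω α β γ : Type*} [Fintype Ω]

noncomputable def jointMatrix (q : Ω → ℝ) (X : Ω → α) (Y : Ω → β) : Matrix α β ℝ :=
  Matrix.of fun a b => pmass q (fun ω => X ω = a ∧ Y ω = b)

lemma CondIndep.jointMatrix_eq_mul [Fintype γ] {q : Ω → ℝ} {X : Ω → α} {Y : Ω → β} {U : Ω → γ}
    (hq : ∀ ω, 0 ≤ q ω) (hci : CondIndep q X Y U) :
    jointMatrix q X Y =
      (Matrix.of fun a u => pmass q (fun ω => U ω = u) *
        condProb q (fun ω => X ω = a) (fun ω => U ω = u)) *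
      Matrix.of fun u b => condProb q (fun ω => Y ω = b) (fun ω => U ω = u) := by
  ext a b
  rw [jointMatrix, Matrix.of_apply, Matrix.mul_apply,
    pmass_eq_sum_pmass_and (fun ω => X ω = a ∧ Y ω = b) U]
  refine Finset.sum_congr rfl fun u _ => ?_
  rw [pmass_and_eq_mul_condProb hq, Matrix.of_apply, Matrix.of_apply, mul_assoc]
  rcases (pmass_nonneg hq fun ω => U ω = u).eq_or_lt with hU | hU
  · rw [← hU, zero_mul, zero_mul]
  · rw [hci u a b hU]

lemma CondIndep.rank_jointMatrix_le [Fintype β] [Fintype γ] {q : Ω → ℝ} {X : Ω → α}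
    {Y : Ω → β} {U : Ω → γ}
    (hq : ∀ ω, 0 ≤ q ω) (hci : CondIndep q X Y U) :
    (jointMatrix q X Y).rank ≤ Fintype.card γ := by
  rw [hci.jointMatrix_eq_mul hq]
  exact (Matrix.rank_mul_le_right _ _).trans (Matrix.rank_le_card_height _)

end JointMatrix

noncomputable def uniformDiag (α : Type*) [Fintype α] : α × α → ℝ :=
  fun ab => if ab.1 = ab.2 then (Fintype.card α : ℝ)⁻¹ else 0

section UniformDiag

variable {α : Type*} [Fintype α]

lemma isPMF_uniformDiag [Nonempty α] : IsPMF (uniformDiag α) where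
  nonneg ω := by unfold uniformDiag; split_ifs <;> positivity
  sum_one := by
    simp [uniformDiag, Fintype.sum_prod_type]

lemma pmass_uniformDiag_fst (a : α) : pmass (uniformDiag α) (fun ω => ω.1 = a) =
    (Fintype.card α : ℝ)⁻¹ := by
  simp [pmass, uniformDiag, Fintype.sum_prod_type]

lemma pmass_uniformDiag_snd (a : α) : pmass (uniformDiag α) (fun ω => ω.2 = a) =
    (Fintype.card α : ℝ)⁻¹ := by
  simp [pmass, uniformDiag, Fintype.sum_prod_type]

lemma pmass_uniformDiag_pair (c : α × α) : pmass (uniformDiag α) (fun ω => (ω.1, ω.2) = c) =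
    uniformDiag α c := by
  simp [pmass]

lemma ent_uniformDiag_pair :
    ent (uniformDiag α) (fun ω => (ω.1, ω.2)) = ent (uniformDiag α) Prod.fst := by
  simp only [ent, pmass_uniformDiag_pair, pmass_uniformDiag_fst, Fintype.sum_prod_type]
  simp [uniformDiag]

lemma ent_uniformDiag_fst : ent (uniformDiag α) Prod.fst = Real.logb 2 (Fintype.card α) := by
  simp only [ent, pmass_uniformDiag_fst, Finset.sum_const, Finset.card_univ, nsmul_eq_mul,
    Real.logb_inv]
  rcases isEmpty_or_nonempty α with _ | _
  · simp
  · have : (Fintype.card α : ℝ) ≠ 0 := by positivity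
    field_simp

lemma mi_uniformDiag : mi (uniformDiag α) Prod.fst Prod.snd = Real.logb 2 (Fintype.card α) := by
  have hsnd : ent (uniformDiag α) Prod.snd = ent (uniformDiag α) Prod.fst := by
    simp only [ent, pmass_uniformDiag_fst, pmass_uniformDiag_snd]
  rw [mi, hsnd, ent_uniformDiag_pair, add_sub_cancel_right, ent_uniformDiag_fst]

lemma rank_uniformDiag :
    (Matrix.of fun a b => uniformDiag α (a, b)).rank = Fintype.card α := by
  have : (Matrix.of fun a b => uniformDiag α (a, b)) =
      Matrix.diagonal fun _ => (Fintype.card α : ℝ)⁻¹ := by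
    ext a b
    simp [uniformDiag, Matrix.diagonal_apply]
  rw [this, Matrix.rank_diagonal]
  refine Fintype.card_congr (Equiv.subtypeUnivEquiv fun a => ?_)
  have : 0 < Fintype.card α := Fintype.card_pos_iff.mpr ⟨a⟩
  positivity

end UniformDiag

theorem exists_dist_violating_card_three :
    ∃ p : Fin 4 × Fin 4 → ℝ, IsPMF p ∧
      Real.logb 2 3 < mi p Prod.fst Prod.snd ∧
      ∀ (Ω : Type) (_ : Fintype Ω) (q : Ω → ℝ) (X : Ω → Fin 4) (Y : Ω → Fin 4)
          (U : Ω → Fin 3), IsPMF q →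
        (∀ a b, pmass q (fun ω => X ω = a ∧ Y ω = b) = p (a, b)) →
        ¬ CondIndep q X Y U := by
  refine ⟨uniformDiag (Fin 4), isPMF_uniformDiag, ?_, ?_⟩
  · rw [mi_uniformDiag, Fintype.card_fin]
    exact Real.logb_lt_logb one_lt_two (by norm_num) (by norm_num)
  · intro Ω _ q X Y U hq hXY hci
    have hrank := hci.rank_jointMatrix_le hq.nonneg
    rw [show jointMatrix q X Y = Matrix.of fun a b => uniformDiag (Fin 4) (a, b) from
      Matrix.ext hXY, rank_uniformDiag] at hrank
    simp at hrank
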